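/- Let i and j be two distinct cut vertices of the adjacency graph of a rectangular floorplan R_1, …, R_n (n ≥ 3) of a rectangle R = [A,B] × [C,D]. Then the corresponding rectangles R_i and R_j span R in the same direction: either both satisfy a = A and b = B (both span the full width), or both satisfy c = C and d = D (both span the full height). -/
import Mathlib


open Set Filter

/-- The closed axis-aligned rectangle `[a,b] × [c,d]` in the plane. -/
def Rect (a b c d : ℝ) : Set (ℝ × ℝ) := Set.Icc a b ×ˢ Set.Icc c d

/-- `IsRFP A B C D a b c d` says that the family of rectangles
`[a k, b k] × [c k, d k]` is a rectangular floorplan of `[A,B] × [C,D]`: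
each member is a nondegenerate rectangle, their union is the big rectangle,
their (open) interiors are pairwise disjoint, and no point lies in four of them. -/
def IsRFP {ι : Type*} [Fintype ι] (A B C D : ℝ) (a b c d : ι → ℝ) : Prop :=
  A < B ∧ C < D ∧
  (∀ k, a k < b k ∧ c k < d k) ∧
  (⋃ k, Rect (a k) (b k) (c k) (d k)) = Rect A B C D ∧
  ((Set.univ : Set ι).Pairwise fun i j =>
    Disjoint (Set.Ioo (a i) (b i) ×ˢ Set.Ioo (c i) (d i))
             (Set.Ioo (a j) (b j) ×ˢ Set.Ioo (c j) (d j))) ∧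
  (∀ p : ℝ × ℝ, {k : ι | p ∈ Rect (a k) (b k) (c k) (d k)}.ncard ≤ 3)

/-- The adjacency graph of a family of rectangles: `i ~ j` iff `i ≠ j` and
the intersection of the two rectangles contains more than one point. -/
def adjGraph {ι : Type*} (a b c d : ι → ℝ) : SimpleGraph ι :=
  SimpleGraph.fromRel fun i j =>
    (Rect (a i) (b i) (c i) (d i) ∩ Rect (a j) (b j) (c j) (d j)).Nontrivial


open Filter in
lemma mem_rect {a b c d : ℝ} {p : ℝ × ℝ} :
    p ∈ Rect a b c d ↔ (a ≤ p.1 ∧ p.1 ≤ b) ∧ (c ≤ p.2 ∧ p.2 ≤ d) := by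
  rw [Rect, Set.mem_prod, Set.mem_Icc, Set.mem_Icc]

lemma rect_closed (a b c d : ℝ) : IsClosed (Rect a b c d) :=
  (isClosed_Icc).prod isClosed_Icc

lemma rect_convex (a b c d : ℝ) : Convex ℝ (Rect a b c d) :=
  (convex_Icc a b).prod (convex_Icc c d)

/-- pigeonhole ray lemma -/
lemma ray_pigeonhole {n : ℕ} {A B C D : ℝ} {a b c d : Fin n → ℝ}
    (hcov : (⋃ k, Rect (a k) (b k) (c k) (d k)) = Rect A B C D)
    (p v : ℝ × ℝ) (hv : ∀ t : ℝ, 0 < t → t ≤ 1 → p + t • v ∈ Rect A B C D) :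
    ∃ m : Fin n, ∃ t : ℝ, 0 < t ∧ t ≤ 1 ∧
      p ∈ Rect (a m) (b m) (c m) (d m) ∧
      p + t • v ∈ Rect (a m) (b m) (c m) (d m) := by
  have hn : ∀ j : ℕ, ∃ m : Fin n, p + (1 / (j + 1 : ℝ)) • v ∈ Rect (a m) (b m) (c m) (d m) := by
    intro j
    have h1 : (0:ℝ) < 1 / (j + 1 : ℝ) := by positivity
    have h2 : (1 / (j + 1 : ℝ)) ≤ 1 := by
      rw [div_le_one (by positivity)]; linarith [Nat.cast_nonneg (α := ℝ) j]
    have := hv _ h1 h2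
    rw [← hcov] at this
    simpa using this
  choose g hg using hn
  obtain ⟨m, hm⟩ := Finite.exists_infinite_fiber g
  have hm' : (g ⁻¹' {m}).Infinite := Set.infinite_coe_iff.mp hm
  set e := hm'.natEmbedding with he
  have heq : ∀ j : ℕ, g (e j : ℕ) = m := fun j => (e j).2
  have hinj : Function.Injective (fun j => ((e j : ℕ) : ℕ)) := fun x y hxy => e.injective (Subtype.ext hxy)
  have htt : Tendsto (fun j => ((e j : ℕ) : ℕ)) atTop atTop := by
    rw [← Nat.cofinite_eq_atTop]; exact hinj.tendsto_cofinite
  have hseq : Tendsto (fun j => p + (1 / ((e j : ℕ) + 1 : ℝ)) • v) atTop (nhds p) := by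
    have h0 : Tendsto (fun j : ℕ => (1 / ((e j : ℕ) + 1 : ℝ))) atTop (nhds 0) :=
      tendsto_one_div_add_atTop_nhds_zero_nat.comp htt
    have := tendsto_const_nhds (x := p) (f := atTop (α := ℕ)).add (h0.smul_const v)
    simpa using this
  have hpm : p ∈ Rect (a m) (b m) (c m) (d m) := by
    refine (rect_closed _ _ _ _).mem_of_tendsto hseq (Filter.Eventually.of_forall fun j => ?_)
    have := hg (e j : ℕ); rwa [heq j] at this
  refine ⟨m, 1 / ((e 0 : ℕ) + 1 : ℝ), by positivity, ?_, hpm, ?_⟩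
  · rw [div_le_one (by positivity)]; linarith [Nat.cast_nonneg (α := ℝ) (e 0 : ℕ)]
  · have := hg (e 0 : ℕ); rwa [heq 0] at this

/-- ray towards a point of the big rectangle, coordinate version -/
lemma ray_corner {n : ℕ} {A B C D : ℝ} {a b c d : Fin n → ℝ}
    (hcov : (⋃ k, Rect (a k) (b k) (c k) (d k)) = Rect A B C D)
    {x y u w : ℝ} (hp : (x, y) ∈ Rect A B C D) (hq : (u, w) ∈ Rect A B C D) :
    ∃ m : Fin n, ∃ t : ℝ, 0 < t ∧ t ≤ 1 ∧
      (x, y) ∈ Rect (a m) (b m) (c m) (d m) ∧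
      (x + t * (u - x), y + t * (w - y)) ∈ Rect (a m) (b m) (c m) (d m) := by
  have hv : ∀ t : ℝ, 0 < t → t ≤ 1 →
      ((x, y) : ℝ × ℝ) + t • (((u, w) : ℝ × ℝ) - (x, y)) ∈ Rect A B C D := by
    intro t ht0 ht1
    have h := rect_convex A B C D hp hq (by linarith : (0:ℝ) ≤ 1 - t) ht0.le (by ring)
    convert h using 1
    have : ((u, w) : ℝ × ℝ) - (x, y) = (u - x, w - y) := rfl
    rw [this]
    ext <;> simp <;> ring
  obtain ⟨m, t, ht0, ht1, h1, h2⟩ := ray_pigeonhole hcov (x, y) ((u, w) - (x, y)) hv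
  refine ⟨m, t, ht0, ht1, h1, ?_⟩
  have heq : ((x, y) : ℝ × ℝ) + t • (((u, w) : ℝ × ℝ) - (x, y))
      = (x + t * (u - x), y + t * (w - y)) := by
    have h0 : ((u, w) : ℝ × ℝ) - (x, y) = (u - x, w - y) := rfl
    rw [h0, Prod.smul_mk, Prod.mk_add_mk]
    simp [smul_eq_mul]
  rwa [heq] at h2

lemma rect_bnd {n : ℕ} {A B C D : ℝ} {a b c d : Fin n → ℝ}
    (hcov : (⋃ k, Rect (a k) (b k) (c k) (d k)) = Rect A B C D)
    (hlt : ∀ k, a k < b k ∧ c k < d k) (k : Fin n) :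
    A ≤ a k ∧ b k ≤ B ∧ C ≤ c k ∧ d k ≤ D := by
  have hsub : Rect (a k) (b k) (c k) (d k) ⊆ Rect A B C D := by
    rw [← hcov]; exact Set.subset_iUnion (fun k => Rect (a k) (b k) (c k) (d k)) k
  have h1 := hsub (show ((a k, c k) : ℝ × ℝ) ∈ _ by
    rw [mem_rect]; exact ⟨⟨le_refl _, (hlt k).1.le⟩, le_refl _, (hlt k).2.le⟩)
  have h2 := hsub (show ((b k, d k) : ℝ × ℝ) ∈ _ by
    rw [mem_rect]; exact ⟨⟨(hlt k).1.le, le_refl _⟩, (hlt k).2.le, le_refl _⟩)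
  rw [mem_rect] at h1 h2
  exact ⟨h1.1.1, h2.1.2, h1.2.1, h2.2.2⟩

set_option maxHeartbeats 1000000 in
/-- k occupies the lower-left quadrant at (x,y), l the upper-right: contradiction. -/
lemma corner_case1 {n : ℕ} {A B C D : ℝ} {a b c d : Fin n → ℝ}
    (hcov : (⋃ k, Rect (a k) (b k) (c k) (d k)) = Rect A B C D)
    (hlt : ∀ k, a k < b k ∧ c k < d k)
    (hdisj : (Set.univ : Set (Fin n)).Pairwise fun i j =>
      Disjoint (Set.Ioo (a i) (b i) ×ˢ Set.Ioo (c i) (d i))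
               (Set.Ioo (a j) (b j) ×ˢ Set.Ioo (c j) (d j)))
    (hcard : ∀ p : ℝ × ℝ, {k : Fin n | p ∈ Rect (a k) (b k) (c k) (d k)}.ncard ≤ 3)
    {k l : Fin n} (hkl : k ≠ l) {x y : ℝ}
    (hbk : b k = x) (hdk : d k = y) (hal : a l = x) (hcl : c l = y) : False := by
  obtain ⟨hAak, hbkB, hCck, hdkD⟩ := rect_bnd hcov hlt k
  obtain ⟨hAal, hblB, hCcl, hdlD⟩ := rect_bnd hcov hlt l
  have hax : a k < x := hbk ▸ (hlt k).1
  have hcy : c k < y := hdk ▸ (hlt k).2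
  have hxb : x < b l := hal ▸ (hlt l).1
  have hyd : y < d l := hcl ▸ (hlt l).2
  have hAx : A < x := lt_of_le_of_lt hAak hax
  have hxB : x < B := lt_of_lt_of_le hxb hblB
  have hCy : C < y := lt_of_le_of_lt hCck hcy
  have hyD : y < D := lt_of_lt_of_le hyd hdlD
  have hpR : ((x, y) : ℝ × ℝ) ∈ Rect A B C D := by
    rw [mem_rect]; exact ⟨⟨hAx.le, hxB.le⟩, hCy.le, hyD.le⟩
  have hpk : ((x, y) : ℝ × ℝ) ∈ Rect (a k) (b k) (c k) (d k) := by
    rw [mem_rect]; exact ⟨⟨hax.le, hbk.ge⟩, hcy.le, hdk.ge⟩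
  have hpl : ((x, y) : ℝ × ℝ) ∈ Rect (a l) (b l) (c l) (d l) := by
    rw [mem_rect]; exact ⟨⟨hal.le, hxb.le⟩, hcl.le, hyd.le⟩
  -- towards corner (B, C)
  obtain ⟨m₁, t₁, ht₁0, ht₁1, hpm₁, hq₁⟩ := ray_corner hcov hpR
    (show ((B, C) : ℝ × ℝ) ∈ Rect A B C D by
      rw [mem_rect]
      exact ⟨⟨le_of_lt (lt_trans hAx hxB), le_refl _⟩, le_refl _, le_of_lt (lt_trans hCy hyD)⟩)
  rw [mem_rect] at hq₁
  obtain ⟨⟨ham₁, hbm₁⟩, hcm₁, hdm₁⟩ := hq₁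
  simp only at ham₁ hbm₁ hcm₁ hdm₁
  have hu₁ : x < x + t₁ * (B - x) := by nlinarith
  have hw₁ : y + t₁ * (C - y) < y := by nlinarith
  have hm₁k : m₁ ≠ k := by
    rintro rfl; rw [hbk] at hbm₁; linarith
  have hm₁l : m₁ ≠ l := by
    rintro rfl; rw [hcl] at hcm₁; linarith
  -- towards corner (A, D)
  obtain ⟨m₂, t₂, ht₂0, ht₂1, hpm₂, hq₂⟩ := ray_corner hcov hpR
    (show ((A, D) : ℝ × ℝ) ∈ Rect A B C D by
      rw [mem_rect]
      exact ⟨⟨le_refl _, le_of_lt (lt_trans hAx hxB)⟩, le_of_lt (lt_trans hCy hyD), le_refl _⟩)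
  rw [mem_rect] at hq₂
  obtain ⟨⟨ham₂, hbm₂⟩, hcm₂, hdm₂⟩ := hq₂
  simp only at ham₂ hbm₂ hcm₂ hdm₂
  have hu₂ : x + t₂ * (A - x) < x := by nlinarith
  have hw₂ : y < y + t₂ * (D - y) := by nlinarith
  have hm₂k : m₂ ≠ k := by
    rintro rfl; rw [hdk] at hdm₂; linarith
  have hm₂l : m₂ ≠ l := by
    rintro rfl; rw [hal] at ham₂; linarith
  have hm₁₂ : m₁ ≠ m₂ := by
    rintro rfl
    set r : ℝ × ℝ := ((max (a k) (x + t₂ * (A - x)) + x)/2,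
                      (max (c k) (y + t₁ * (C - y)) + y)/2) with hr
    have hr1lt : max (a k) (x + t₂ * (A - x)) < x := max_lt hax hu₂
    have hr2lt : max (c k) (y + t₁ * (C - y)) < y := max_lt hcy hw₁
    have h1a := le_max_left (a k) (x + t₂ * (A - x))
    have h1b := le_max_right (a k) (x + t₂ * (A - x))
    have h2a := le_max_left (c k) (y + t₁ * (C - y))
    have h2b := le_max_right (c k) (y + t₁ * (C - y))
    have hrk : r ∈ Set.Ioo (a k) (b k) ×ˢ Set.Ioo (c k) (d k) := by
      rw [Set.mem_prod, Set.mem_Ioo, Set.mem_Ioo, hbk, hdk]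
      constructor
      · constructor <;> simp only [hr] <;> linarith
      · constructor <;> simp only [hr] <;> linarith
    have hrm : r ∈ Set.Ioo (a m₁) (b m₁) ×ˢ Set.Ioo (c m₁) (d m₁) := by
      rw [Set.mem_prod, Set.mem_Ioo, Set.mem_Ioo]
      constructor
      · constructor <;> simp only [hr] <;> linarith
      · constructor <;> simp only [hr] <;> linarith
    exact Set.disjoint_left.mp
      (hdisj (Set.mem_univ k) (Set.mem_univ m₁) (Ne.symm hm₁k)) hrk hrm
  have hsub4 : ({k, l, m₁, m₂} : Set (Fin n)) ⊆
      {q : Fin n | ((x, y) : ℝ × ℝ) ∈ Rect (a q) (b q) (c q) (d q)} := by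
    rintro q (rfl | rfl | rfl | rfl)
    · exact hpk
    · exact hpl
    · exact hpm₁
    · exact hpm₂
  have h4 : ({k, l, m₁, m₂} : Set (Fin n)).ncard = 4 := by
    rw [Set.ncard_insert_of_notMem (by simp [hkl, hm₁k.symm, hm₂k.symm]),
        Set.ncard_insert_of_notMem (by simp [hm₁l.symm, hm₂l.symm]),
        Set.ncard_insert_of_notMem (by simp [hm₁₂]), Set.ncard_singleton]
  have h5 := Set.ncard_le_ncard hsub4 (Set.toFinite _)
  have hc := hcard (x, y)
  omega

set_option maxHeartbeats 1000000 in
/-- k occupies the upper-left quadrant at (x,y), l the lower-right: contradiction. -/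
lemma corner_case2 {n : ℕ} {A B C D : ℝ} {a b c d : Fin n → ℝ}
    (hcov : (⋃ k, Rect (a k) (b k) (c k) (d k)) = Rect A B C D)
    (hlt : ∀ k, a k < b k ∧ c k < d k)
    (hdisj : (Set.univ : Set (Fin n)).Pairwise fun i j =>
      Disjoint (Set.Ioo (a i) (b i) ×ˢ Set.Ioo (c i) (d i))
               (Set.Ioo (a j) (b j) ×ˢ Set.Ioo (c j) (d j)))
    (hcard : ∀ p : ℝ × ℝ, {k : Fin n | p ∈ Rect (a k) (b k) (c k) (d k)}.ncard ≤ 3)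
    {k l : Fin n} (hkl : k ≠ l) {x y : ℝ}
    (hbk : b k = x) (hck : c k = y) (hal : a l = x) (hdl : d l = y) : False := by
  obtain ⟨hAak, hbkB, hCck, hdkD⟩ := rect_bnd hcov hlt k
  obtain ⟨hAal, hblB, hCcl, hdlD⟩ := rect_bnd hcov hlt l
  have hax : a k < x := hbk ▸ (hlt k).1
  have hyd : y < d k := hck ▸ (hlt k).2
  have hxb : x < b l := hal ▸ (hlt l).1
  have hcy : c l < y := hdl ▸ (hlt l).2
  have hAx : A < x := lt_of_le_of_lt hAak hax
  have hxB : x < B := lt_of_lt_of_le hxb hblB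
  have hCy : C < y := lt_of_le_of_lt hCcl hcy
  have hyD : y < D := lt_of_lt_of_le hyd hdkD
  have hpR : ((x, y) : ℝ × ℝ) ∈ Rect A B C D := by
    rw [mem_rect]; exact ⟨⟨hAx.le, hxB.le⟩, hCy.le, hyD.le⟩
  have hpk : ((x, y) : ℝ × ℝ) ∈ Rect (a k) (b k) (c k) (d k) := by
    rw [mem_rect]; exact ⟨⟨hax.le, hbk.ge⟩, hck.le, hyd.le⟩
  have hpl : ((x, y) : ℝ × ℝ) ∈ Rect (a l) (b l) (c l) (d l) := by
    rw [mem_rect]; exact ⟨⟨hal.le, hxb.le⟩, hcy.le, hdl.ge⟩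
  -- towards corner (B, D)
  obtain ⟨m₁, t₁, ht₁0, ht₁1, hpm₁, hq₁⟩ := ray_corner hcov hpR
    (show ((B, D) : ℝ × ℝ) ∈ Rect A B C D by
      rw [mem_rect]
      exact ⟨⟨le_of_lt (lt_trans hAx hxB), le_refl _⟩, le_of_lt (lt_trans hCy hyD), le_refl _⟩)
  rw [mem_rect] at hq₁
  obtain ⟨⟨ham₁, hbm₁⟩, hcm₁, hdm₁⟩ := hq₁
  simp only at ham₁ hbm₁ hcm₁ hdm₁
  have hu₁ : x < x + t₁ * (B - x) := by nlinarith
  have hw₁ : y < y + t₁ * (D - y) := by nlinarith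
  have hm₁k : m₁ ≠ k := by
    rintro rfl; rw [hbk] at hbm₁; linarith
  have hm₁l : m₁ ≠ l := by
    rintro rfl; rw [hdl] at hdm₁; linarith
  -- towards corner (A, C)
  obtain ⟨m₂, t₂, ht₂0, ht₂1, hpm₂, hq₂⟩ := ray_corner hcov hpR
    (show ((A, C) : ℝ × ℝ) ∈ Rect A B C D by
      rw [mem_rect]
      exact ⟨⟨le_refl _, le_of_lt (lt_trans hAx hxB)⟩, le_refl _, le_of_lt (lt_trans hCy hyD)⟩)
  rw [mem_rect] at hq₂
  obtain ⟨⟨ham₂, hbm₂⟩, hcm₂, hdm₂⟩ := hq₂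
  simp only at ham₂ hbm₂ hcm₂ hdm₂
  have hu₂ : x + t₂ * (A - x) < x := by nlinarith
  have hw₂ : y + t₂ * (C - y) < y := by nlinarith
  have hm₂k : m₂ ≠ k := by
    rintro rfl; rw [hck] at hcm₂; linarith
  have hm₂l : m₂ ≠ l := by
    rintro rfl; rw [hal] at ham₂; linarith
  have hm₁₂ : m₁ ≠ m₂ := by
    rintro rfl
    set r : ℝ × ℝ := ((max (a k) (x + t₂ * (A - x)) + x)/2,
                      (y + min (d k) (y + t₁ * (D - y)))/2) with hr
    have hr1lt : max (a k) (x + t₂ * (A - x)) < x := max_lt hax hu₂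
    have hr2gt : y < min (d k) (y + t₁ * (D - y)) := lt_min hyd hw₁
    have h1a := le_max_left (a k) (x + t₂ * (A - x))
    have h1b := le_max_right (a k) (x + t₂ * (A - x))
    have h2a := min_le_left (d k) (y + t₁ * (D - y))
    have h2b := min_le_right (d k) (y + t₁ * (D - y))
    have hrk : r ∈ Set.Ioo (a k) (b k) ×ˢ Set.Ioo (c k) (d k) := by
      rw [Set.mem_prod, Set.mem_Ioo, Set.mem_Ioo, hbk, hck]
      constructor
      · constructor <;> simp only [hr] <;> linarith
      · constructor <;> simp only [hr] <;> linarith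
    have hrm : r ∈ Set.Ioo (a m₁) (b m₁) ×ˢ Set.Ioo (c m₁) (d m₁) := by
      rw [Set.mem_prod, Set.mem_Ioo, Set.mem_Ioo]
      constructor
      · constructor <;> simp only [hr] <;> linarith
      · constructor <;> simp only [hr] <;> linarith
    exact Set.disjoint_left.mp
      (hdisj (Set.mem_univ k) (Set.mem_univ m₁) (Ne.symm hm₁k)) hrk hrm
  have hsub4 : ({k, l, m₁, m₂} : Set (Fin n)) ⊆
      {q : Fin n | ((x, y) : ℝ × ℝ) ∈ Rect (a q) (b q) (c q) (d q)} := by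
    rintro q (rfl | rfl | rfl | rfl)
    · exact hpk
    · exact hpl
    · exact hpm₁
    · exact hpm₂
  have h4 : ({k, l, m₁, m₂} : Set (Fin n)).ncard = 4 := by
    rw [Set.ncard_insert_of_notMem (by simp [hkl, hm₁k.symm, hm₂k.symm]),
        Set.ncard_insert_of_notMem (by simp [hm₁l.symm, hm₂l.symm]),
        Set.ncard_insert_of_notMem (by simp [hm₁₂]), Set.ncard_singleton]
  have h5 := Set.ncard_le_ncard hsub4 (Set.toFinite _)
  have hc := hcard (x, y)
  omega

/-- in an RFP, two rectangles meeting in a point meet in more than a point -/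
lemma nontrivial_inter {n : ℕ} {A B C D : ℝ} {a b c d : Fin n → ℝ}
    (hcov : (⋃ k, Rect (a k) (b k) (c k) (d k)) = Rect A B C D)
    (hlt : ∀ k, a k < b k ∧ c k < d k)
    (hdisj : (Set.univ : Set (Fin n)).Pairwise fun i j =>
      Disjoint (Set.Ioo (a i) (b i) ×ˢ Set.Ioo (c i) (d i))
               (Set.Ioo (a j) (b j) ×ˢ Set.Ioo (c j) (d j)))
    (hcard : ∀ p : ℝ × ℝ, {k : Fin n | p ∈ Rect (a k) (b k) (c k) (d k)}.ncard ≤ 3)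
    {k l : Fin n} (hkl : k ≠ l) {p : ℝ × ℝ}
    (hpk : p ∈ Rect (a k) (b k) (c k) (d k)) (hpl : p ∈ Rect (a l) (b l) (c l) (d l)) :
    (Rect (a k) (b k) (c k) (d k) ∩ Rect (a l) (b l) (c l) (d l)).Nontrivial := by
  by_contra hnt
  rw [Set.not_nontrivial_iff] at hnt
  have hpmem : p ∈ Rect (a k) (b k) (c k) (d k) ∩ Rect (a l) (b l) (c l) (d l) := ⟨hpk, hpl⟩
  obtain ⟨⟨hak, hbk⟩, hck, hdk⟩ := mem_rect.mp hpk
  obtain ⟨⟨hal, hbl⟩, hcl, hdl⟩ := mem_rect.mp hpl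
  -- horizontal degeneracy
  have hxeq : min (b k) (b l) = max (a k) (a l) := by
    by_contra hne
    have hlt' : max (a k) (a l) < min (b k) (b l) :=
      lt_of_le_of_ne (le_trans (max_le hak hal) (le_min hbk hbl)) (Ne.symm hne)
    have e1 := le_max_left (a k) (a l)
    have e2 := le_max_right (a k) (a l)
    have e3 := min_le_left (b k) (b l)
    have e4 := min_le_right (b k) (b l)
    have hz1 : ((max (a k) (a l), p.2) : ℝ × ℝ) ∈
        Rect (a k) (b k) (c k) (d k) ∩ Rect (a l) (b l) (c l) (d l) := by
      constructor <;> rw [mem_rect] <;>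
        exact ⟨⟨by simp only; linarith, by simp only; linarith⟩,
               by simp only; linarith, by simp only; linarith⟩
    have hz2 : ((min (b k) (b l), p.2) : ℝ × ℝ) ∈
        Rect (a k) (b k) (c k) (d k) ∩ Rect (a l) (b l) (c l) (d l) := by
      constructor <;> rw [mem_rect] <;>
        exact ⟨⟨by simp only; linarith, by simp only; linarith⟩,
               by simp only; linarith, by simp only; linarith⟩
    have heq12 := (hnt hz1 hz2 : _)
    rw [Prod.mk.injEq] at heq12
    exact absurd heq12.1 (ne_of_lt hlt')
  have hyeq : min (d k) (d l) = max (c k) (c l) := by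
    by_contra hne
    have hlt' : max (c k) (c l) < min (d k) (d l) :=
      lt_of_le_of_ne (le_trans (max_le hck hcl) (le_min hdk hdl)) (Ne.symm hne)
    have e1 := le_max_left (c k) (c l)
    have e2 := le_max_right (c k) (c l)
    have e3 := min_le_left (d k) (d l)
    have e4 := min_le_right (d k) (d l)
    have hz1 : ((p.1, max (c k) (c l)) : ℝ × ℝ) ∈
        Rect (a k) (b k) (c k) (d k) ∩ Rect (a l) (b l) (c l) (d l) := by
      constructor <;> rw [mem_rect] <;>
        exact ⟨⟨by simp only; linarith, by simp only; linarith⟩,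
               by simp only; linarith, by simp only; linarith⟩
    have hz2 : ((p.1, min (d k) (d l)) : ℝ × ℝ) ∈
        Rect (a k) (b k) (c k) (d k) ∩ Rect (a l) (b l) (c l) (d l) := by
      constructor <;> rw [mem_rect] <;>
        exact ⟨⟨by simp only; linarith, by simp only; linarith⟩,
               by simp only; linarith, by simp only; linarith⟩
    have heq12 := (hnt hz1 hz2 : _)
    rw [Prod.mk.injEq] at heq12
    exact absurd heq12.2 (ne_of_lt hlt')
  have hx1 : max (a k) (a l) = p.1 :=
    le_antisymm (max_le hak hal) (hxeq ▸ le_min hbk hbl)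
  have hx2 : min (b k) (b l) = p.1 := hxeq.trans hx1
  have hy1 : max (c k) (c l) = p.2 :=
    le_antisymm (max_le hck hcl) (hyeq ▸ le_min hdk hdl)
  have hy2 : min (d k) (d l) = p.2 := hyeq.trans hy1
  have hH : (b k = p.1 ∧ a l = p.1) ∨ (b l = p.1 ∧ a k = p.1) := by
    rcases max_choice (a k) (a l) with h | h <;> rcases min_choice (b k) (b l) with h' | h'
    · exact absurd ((h ▸ hx1).trans (h' ▸ hx2).symm) (ne_of_lt (hlt k).1)
    · exact Or.inr ⟨h' ▸ hx2, h ▸ hx1⟩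
    · exact Or.inl ⟨h' ▸ hx2, h ▸ hx1⟩
    · exact absurd ((h ▸ hx1).trans (h' ▸ hx2).symm) (ne_of_lt (hlt l).1)
  have hV : (d k = p.2 ∧ c l = p.2) ∨ (d l = p.2 ∧ c k = p.2) := by
    rcases max_choice (c k) (c l) with h | h <;> rcases min_choice (d k) (d l) with h' | h'
    · exact absurd ((h ▸ hy1).trans (h' ▸ hy2).symm) (ne_of_lt (hlt k).2)
    · exact Or.inr ⟨h' ▸ hy2, h ▸ hy1⟩
    · exact Or.inl ⟨h' ▸ hy2, h ▸ hy1⟩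
    · exact absurd ((h ▸ hy1).trans (h' ▸ hy2).symm) (ne_of_lt (hlt l).2)
  rcases hH with ⟨h1, h2⟩ | ⟨h1, h2⟩ <;> rcases hV with ⟨h3, h4⟩ | ⟨h3, h4⟩
  · exact corner_case1 hcov hlt hdisj hcard hkl h1 h3 h2 h4
  · exact corner_case2 hcov hlt hdisj hcard hkl h1 h4 h2 h3
  · exact corner_case2 hcov hlt hdisj hcard hkl.symm h1 h4 h2 h3
  · exact corner_case1 hcov hlt hdisj hcard hkl.symm h1 h3 h2 h4

lemma joinedIn_segment {W : Set (ℝ × ℝ)} {p q : ℝ × ℝ} (h : segment ℝ p q ⊆ W) :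
    JoinedIn W p q :=
  (((convex_segment p q).isPathConnected ⟨p, left_mem_segment ℝ p q⟩).joinedIn p
    (left_mem_segment ℝ p q) q (right_mem_segment ℝ p q)).mono h

lemma mem_of_ray {U : Set (ℝ × ℝ)} (hU : IsClosed U) (p v : ℝ × ℝ)
    (h : ∀ t : ℝ, 0 < t → t ≤ 1 → p + t • v ∈ U) : p ∈ U := by
  have hseq : Tendsto (fun j : ℕ => p + (1 / (j + 1 : ℝ)) • v) atTop (nhds p) := by
    have h0 : Tendsto (fun j : ℕ => (1 / (j + 1 : ℝ))) atTop (nhds 0) :=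
      tendsto_one_div_add_atTop_nhds_zero_nat
    have := tendsto_const_nhds (x := p) (f := atTop (α := ℕ)).add (h0.smul_const v)
    simpa using this
  refine hU.mem_of_tendsto hseq (Filter.Eventually.of_forall fun j => ?_)
  refine h _ (by positivity) ?_
  rw [div_le_one (by positivity)]; linarith [Nat.cast_nonneg (α := ℝ) j]


lemma comb_bounds {s t v w C D : ℝ} (hs : 0 ≤ s) (ht : 0 ≤ t) (hst : s + t = 1)
    (h1 : C ≤ v) (h2 : v ≤ D) (h3 : C ≤ w) (h4 : w ≤ D) :
    C ≤ s * v + t * w ∧ s * v + t * w ≤ D := by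
  have hC : s * C + t * C = C := by linear_combination C * hst
  have hD : s * D + t * D = D := by linear_combination D * hst
  constructor <;>
    nlinarith [mul_le_mul_of_nonneg_left h1 hs, mul_le_mul_of_nonneg_left h3 ht,
      mul_le_mul_of_nonneg_left h2 hs, mul_le_mul_of_nonneg_left h4 ht]

set_option maxHeartbeats 1000000 in
lemma induced_connected {n : ℕ} {A B C D : ℝ} {a b c d : Fin n → ℝ}
    (hAB : A < B) (hCD : C < D)
    (hlt : ∀ k, a k < b k ∧ c k < d k)
    (hcov : (⋃ k, Rect (a k) (b k) (c k) (d k)) = Rect A B C D)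
    (hdisj : (Set.univ : Set (Fin n)).Pairwise fun i j =>
      Disjoint (Set.Ioo (a i) (b i) ×ˢ Set.Ioo (c i) (d i))
               (Set.Ioo (a j) (b j) ×ˢ Set.Ioo (c j) (d j)))
    (hcard : ∀ p : ℝ × ℝ, {k : Fin n | p ∈ Rect (a k) (b k) (c k) (d k)}.ncard ≤ 3)
    (i : Fin n) (hnemp : Nonempty ↑({i}ᶜ : Set (Fin n)))
    (hH : ¬(a i = A ∧ b i = B)) (hV : ¬(c i = C ∧ d i = D)) :
    ((adjGraph a b c d).induce ({i}ᶜ : Set (Fin n))).Connected := by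
  obtain ⟨hAai, hbiB, hCci, hdiD⟩ := rect_bnd hcov hlt i
  have habi := (hlt i).1
  have hcdi := (hlt i).2
  set I : Set ℝ := {x | (a i < x ∧ x < b i) ∨ (x = a i ∧ a i = A) ∨ (x = b i ∧ b i = B)} with hI
  set J : Set ℝ := {y | (c i < y ∧ y < d i) ∨ (y = c i ∧ c i = C) ∨ (y = d i ∧ d i = D)} with hJ
  have hIsub : ∀ x ∈ I, a i ≤ x ∧ x ≤ b i := by
    rintro x (⟨h1, h2⟩ | ⟨rfl, h⟩ | ⟨rfl, h⟩)
    · exact ⟨h1.le, h2.le⟩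
    · exact ⟨le_refl _, habi.le⟩
    · exact ⟨habi.le, le_refl _⟩
  have hJsub : ∀ y ∈ J, c i ≤ y ∧ y ≤ d i := by
    rintro y (⟨h1, h2⟩ | ⟨rfl, h⟩ | ⟨rfl, h⟩)
    · exact ⟨h1.le, h2.le⟩
    · exact ⟨le_refl _, hcdi.le⟩
    · exact ⟨hcdi.le, le_refl _⟩
  obtain ⟨x₀, hx₀R, hx₀I⟩ : ∃ x₀, x₀ ∈ Set.Icc A B ∧ x₀ ∉ I := by
    by_cases hA : a i = A
    · have hbB' : b i < B := lt_of_le_of_ne hbiB (fun h => hH ⟨hA, h⟩)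
      exact ⟨B, ⟨hAB.le, le_refl _⟩, by
        rintro (⟨h1, h2⟩ | ⟨h1, h2⟩ | ⟨h1, h2⟩) <;> linarith⟩
    · have hA' : A < a i := lt_of_le_of_ne hAai (Ne.symm hA)
      exact ⟨A, ⟨le_refl _, hAB.le⟩, by
        rintro (⟨h1, h2⟩ | ⟨h1, h2⟩ | ⟨h1, h2⟩) <;> linarith⟩
  obtain ⟨y₀, hy₀R, hy₀J⟩ : ∃ y₀, y₀ ∈ Set.Icc C D ∧ y₀ ∉ J := by
    by_cases hC : c i = C
    · have hdD' : d i < D := lt_of_le_of_ne hdiD (fun h => hV ⟨hC, h⟩)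
      exact ⟨D, ⟨hCD.le, le_refl _⟩, by
        rintro (⟨h1, h2⟩ | ⟨h1, h2⟩ | ⟨h1, h2⟩) <;> linarith⟩
    · have hC' : C < c i := lt_of_le_of_ne hCci (Ne.symm hC)
      exact ⟨C, ⟨le_refl _, hCD.le⟩, by
        rintro (⟨h1, h2⟩ | ⟨h1, h2⟩ | ⟨h1, h2⟩) <;> linarith⟩
  set W : Set (ℝ × ℝ) := Rect A B C D \ (I ×ˢ J) with hW
  have hw₀ : ((x₀, y₀) : ℝ × ℝ) ∈ W := by
    refine ⟨mem_rect.mpr ⟨⟨hx₀R.1, hx₀R.2⟩, hy₀R.1, hy₀R.2⟩, ?_⟩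
    rintro ⟨h1, -⟩; exact hx₀I h1
  -- W is path connected
  have hWpc : IsPathConnected W := by
    refine ⟨(x₀, y₀), hw₀, ?_⟩
    rintro ⟨u, v⟩ ⟨huvR, huvIJ⟩
    rw [mem_rect] at huvR
    obtain ⟨⟨hAu, huB⟩, hCv, hvD⟩ := huvR
    simp only at hAu huB hCv hvD
    by_cases hu : u ∈ I
    · have hv : v ∉ J := fun hv => huvIJ ⟨hu, hv⟩
      have seg1 : segment ℝ ((u, v) : ℝ × ℝ) (x₀, v) ⊆ W := by
        rintro z ⟨s, t, hs, ht, hst, rfl⟩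
        have hzeq : s • ((u, v) : ℝ × ℝ) + t • ((x₀, v) : ℝ × ℝ)
            = (s * u + t * x₀, s * v + t * v) := rfl
        rw [hzeq]
        have h2 : s * v + t * v = v := by linear_combination v * hst
        obtain ⟨e1, e2⟩ := comb_bounds hs ht hst hAu huB hx₀R.1 hx₀R.2
        refine ⟨mem_rect.mpr ⟨⟨e1, e2⟩, by rw [h2]; exact ⟨hCv, hvD⟩⟩, ?_⟩
        rintro ⟨-, hzJ⟩
        rw [h2] at hzJ
        exact hv hzJ
      have seg2 : segment ℝ ((x₀, v) : ℝ × ℝ) (x₀, y₀) ⊆ W := by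
        rintro z ⟨s, t, hs, ht, hst, rfl⟩
        have hzeq : s • ((x₀, v) : ℝ × ℝ) + t • ((x₀, y₀) : ℝ × ℝ)
            = (s * x₀ + t * x₀, s * v + t * y₀) := rfl
        rw [hzeq]
        have h1 : s * x₀ + t * x₀ = x₀ := by linear_combination x₀ * hst
        obtain ⟨e1, e2⟩ := comb_bounds hs ht hst hCv hvD hy₀R.1 hy₀R.2
        refine ⟨mem_rect.mpr ⟨by rw [h1]; exact ⟨hx₀R.1, hx₀R.2⟩, ⟨e1, e2⟩⟩, ?_⟩
        rintro ⟨hzI, -⟩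
        rw [h1] at hzI
        exact hx₀I hzI
      exact ((joinedIn_segment seg1).trans (joinedIn_segment seg2)).symm
    · have seg1 : segment ℝ ((u, v) : ℝ × ℝ) (u, y₀) ⊆ W := by
        rintro z ⟨s, t, hs, ht, hst, rfl⟩
        have hzeq : s • ((u, v) : ℝ × ℝ) + t • ((u, y₀) : ℝ × ℝ)
            = (s * u + t * u, s * v + t * y₀) := rfl
        rw [hzeq]
        have h1 : s * u + t * u = u := by linear_combination u * hst
        obtain ⟨e1, e2⟩ := comb_bounds hs ht hst hCv hvD hy₀R.1 hy₀R.2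
        refine ⟨mem_rect.mpr ⟨by rw [h1]; exact ⟨hAu, huB⟩, ⟨e1, e2⟩⟩, ?_⟩
        rintro ⟨hzI, -⟩
        rw [h1] at hzI
        exact hu hzI
      have seg2 : segment ℝ ((u, y₀) : ℝ × ℝ) (x₀, y₀) ⊆ W := by
        rintro z ⟨s, t, hs, ht, hst, rfl⟩
        have hzeq : s • ((u, y₀) : ℝ × ℝ) + t • ((x₀, y₀) : ℝ × ℝ)
            = (s * u + t * x₀, s * y₀ + t * y₀) := rfl
        rw [hzeq]
        have h2 : s * y₀ + t * y₀ = y₀ := by linear_combination y₀ * hst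
        obtain ⟨e1, e2⟩ := comb_bounds hs ht hst hAu huB hx₀R.1 hx₀R.2
        refine ⟨mem_rect.mpr ⟨⟨e1, e2⟩, by rw [h2]; exact ⟨hy₀R.1, hy₀R.2⟩⟩, ?_⟩
        rintro ⟨-, hzJ⟩
        rw [h2] at hzJ
        exact hy₀J hzJ
      exact ((joinedIn_segment seg1).trans (joinedIn_segment seg2)).symm
  set U : Set (ℝ × ℝ) := ⋃ k ∈ ({i}ᶜ : Set (Fin n)), Rect (a k) (b k) (c k) (d k) with hU
  have hUclosed : IsClosed U :=
    Set.Finite.isClosed_biUnion (Set.toFinite _) (fun k _ => rect_closed _ _ _ _)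
  have hmemU : ∀ (q : ℝ × ℝ), q ∈ Rect A B C D → q.1 < a i → q ∈ U := by
    intro q hq hq1
    rw [← hcov] at hq
    obtain ⟨k, hk⟩ := Set.mem_iUnion.mp hq
    have hki : k ≠ i := by
      rintro rfl
      exact absurd (mem_rect.mp hk).1.1 (not_le.mpr hq1)
    exact Set.mem_biUnion hki hk
  have hmemU2 : ∀ (q : ℝ × ℝ), q ∈ Rect A B C D → b i < q.1 → q ∈ U := by
    intro q hq hq1
    rw [← hcov] at hq
    obtain ⟨k, hk⟩ := Set.mem_iUnion.mp hq
    have hki : k ≠ i := by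
      rintro rfl
      exact absurd (mem_rect.mp hk).1.2 (not_le.mpr hq1)
    exact Set.mem_biUnion hki hk
  have hmemU3 : ∀ (q : ℝ × ℝ), q ∈ Rect A B C D → q.2 < c i → q ∈ U := by
    intro q hq hq1
    rw [← hcov] at hq
    obtain ⟨k, hk⟩ := Set.mem_iUnion.mp hq
    have hki : k ≠ i := by
      rintro rfl
      exact absurd (mem_rect.mp hk).2.1 (not_le.mpr hq1)
    exact Set.mem_biUnion hki hk
  have hmemU4 : ∀ (q : ℝ × ℝ), q ∈ Rect A B C D → d i < q.2 → q ∈ U := by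
    intro q hq hq1
    rw [← hcov] at hq
    obtain ⟨k, hk⟩ := Set.mem_iUnion.mp hq
    have hki : k ≠ i := by
      rintro rfl
      exact absurd (mem_rect.mp hk).2.2 (not_le.mpr hq1)
    exact Set.mem_biUnion hki hk
  -- W is covered by the small rectangles other than i
  have hWU : W ⊆ U := by
    rintro ⟨u, v⟩ ⟨hmemR, hIJ⟩
    by_contra hnU
    have hmemR' := hmemR
    rw [← hcov] at hmemR'
    obtain ⟨k, hk⟩ := Set.mem_iUnion.mp hmemR'
    have hki : k = i := by
      by_contra hne
      exact hnU (Set.mem_biUnion hne hk)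
    subst hki
    obtain ⟨⟨haiu, hubi⟩, hcv, hvd⟩ := mem_rect.mp hk
    simp only at haiu hubi hcv hvd
    obtain ⟨⟨hAu, huB⟩, hCv, hvD⟩ := mem_rect.mp hmemR
    simp only at hAu huB hCv hvD
    apply hIJ
    constructor
    · -- u ∈ I
      rcases eq_or_lt_of_le haiu with he | hlt1
      · by_cases hA : a k = A
        · exact Or.inr (Or.inl ⟨he.symm, hA⟩)
        · exfalso
          apply hnU
          have hA' : A < a k := lt_of_le_of_ne hAai (Ne.symm hA)
          apply mem_of_ray hUclosed _ ((A - u, 0))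
          intro t ht0 ht1
          have hq : ((u, v) : ℝ × ℝ) + t • ((A - u, 0) : ℝ × ℝ) = (u + t * (A - u), v) := by
            rw [Prod.smul_mk, Prod.mk_add_mk]
            simp [smul_eq_mul]
          rw [hq]
          have hAu' : A < u := he ▸ hA'
          refine hmemU _ (mem_rect.mpr ⟨⟨by simp only; nlinarith, by simp only; nlinarith⟩,
            ⟨hCv, hvD⟩⟩) ?_
          simp only
          nlinarith
      · rcases eq_or_lt_of_le hubi with he2 | hlt2
        · by_cases hB : b k = B
          · exact Or.inr (Or.inr ⟨he2, hB⟩)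
          · exfalso
            apply hnU
            have hB' : b k < B := lt_of_le_of_ne hbiB hB
            apply mem_of_ray hUclosed _ ((B - u, 0))
            intro t ht0 ht1
            have hq : ((u, v) : ℝ × ℝ) + t • ((B - u, 0) : ℝ × ℝ) = (u + t * (B - u), v) := by
              rw [Prod.smul_mk, Prod.mk_add_mk]
              simp [smul_eq_mul]
            rw [hq]
            have huB' : u < B := he2 ▸ hB'
            refine hmemU2 _ (mem_rect.mpr ⟨⟨by simp only; nlinarith, by simp only; nlinarith⟩,
              ⟨hCv, hvD⟩⟩) ?_
            simp only
            nlinarith [he2]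
        · exact Or.inl ⟨hlt1, hlt2⟩
    · -- v ∈ J
      rcases eq_or_lt_of_le hcv with he | hlt1
      · by_cases hC : c k = C
        · exact Or.inr (Or.inl ⟨he.symm, hC⟩)
        · exfalso
          apply hnU
          have hC' : C < c k := lt_of_le_of_ne hCci (Ne.symm hC)
          apply mem_of_ray hUclosed _ ((0, C - v))
          intro t ht0 ht1
          have hq : ((u, v) : ℝ × ℝ) + t • ((0, C - v) : ℝ × ℝ) = (u, v + t * (C - v)) := by
            rw [Prod.smul_mk, Prod.mk_add_mk]
            simp [smul_eq_mul]
          rw [hq]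
          have hCv' : C < v := he ▸ hC'
          refine hmemU3 _ (mem_rect.mpr ⟨⟨hAu, huB⟩,
            ⟨by simp only; nlinarith, by simp only; nlinarith⟩⟩) ?_
          simp only
          nlinarith
      · rcases eq_or_lt_of_le hvd with he2 | hlt2
        · by_cases hD : d k = D
          · exact Or.inr (Or.inr ⟨he2, hD⟩)
          · exfalso
            apply hnU
            have hD' : d k < D := lt_of_le_of_ne hdiD hD
            apply mem_of_ray hUclosed _ ((0, D - v))
            intro t ht0 ht1
            have hq : ((u, v) : ℝ × ℝ) + t • ((0, D - v) : ℝ × ℝ) = (u, v + t * (D - v)) := by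
              rw [Prod.smul_mk, Prod.mk_add_mk]
              simp [smul_eq_mul]
            rw [hq]
            have hvD' : v < D := he2 ▸ hD'
            refine hmemU4 _ (mem_rect.mpr ⟨⟨hAu, huB⟩,
              ⟨by simp only; nlinarith, by simp only; nlinarith⟩⟩) ?_
            simp only
            nlinarith [he2]
        · exact Or.inl ⟨hlt1, hlt2⟩
  -- each small rectangle (other than i) meets W
  have hmeets : ∀ k : Fin n, k ≠ i → ∃ q : ℝ × ℝ,
      q ∈ Rect (a k) (b k) (c k) (d k) ∩ W := by
    intro k hki
    obtain ⟨hAak, hbkB, hCck, hdkD⟩ := rect_bnd hcov hlt k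
    have habk := (hlt k).1
    have hcdk := (hlt k).2
    by_contra hno
    push_neg at hno
    have hsubIJ : Rect (a k) (b k) (c k) (d k) ⊆ I ×ˢ J := by
      intro q hq
      have hqR : q ∈ Rect A B C D :=
        mem_rect.mpr ⟨⟨le_trans hAak (mem_rect.mp hq).1.1, le_trans (mem_rect.mp hq).1.2 hbkB⟩,
          le_trans hCck (mem_rect.mp hq).2.1, le_trans (mem_rect.mp hq).2.2 hdkD⟩
      by_contra hqIJ
      exact hno q ⟨hq, hqR, hqIJ⟩
    have hc1 := hsubIJ (mem_rect.mpr ⟨⟨le_refl _, habk.le⟩, le_refl _, hcdk.le⟩ :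
      ((a k, c k) : ℝ × ℝ) ∈ _)
    have hc2 := hsubIJ (mem_rect.mpr ⟨⟨habk.le, le_refl _⟩, hcdk.le, le_refl _⟩ :
      ((b k, d k) : ℝ × ℝ) ∈ _)
    have h1 := hIsub _ hc1.1
    have h2 := hIsub _ hc2.1
    have h3 := hJsub _ hc1.2
    have h4 := hJsub _ hc2.2
    simp only at h1 h2 h3 h4
    set z : ℝ × ℝ := ((a k + b k)/2, (c k + d k)/2) with hz
    have hzk : z ∈ Set.Ioo (a k) (b k) ×ˢ Set.Ioo (c k) (d k) := by
      constructor
      · constructor <;> simp only [hz] <;> linarith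
      · constructor <;> simp only [hz] <;> linarith
    have hzi : z ∈ Set.Ioo (a i) (b i) ×ˢ Set.Ioo (c i) (d i) := by
      constructor
      · constructor <;> simp only [hz] <;> linarith [h1.1, h2.2]
      · constructor <;> simp only [hz] <;> linarith [h3.1, h4.2]
    exact Set.disjoint_left.mp
      (hdisj (Set.mem_univ k) (Set.mem_univ i) hki) hzk hzi
  -- U is preconnected
  have hUpre : IsPreconnected U := by
    have hUeq : U = ⋃₀ ((fun k => Rect (a k) (b k) (c k) (d k) ∪ W) ''
        ({i}ᶜ : Set (Fin n))) := by
      rw [Set.sUnion_image]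
      apply subset_antisymm
      · intro z hz
        obtain ⟨k, hk, hzk⟩ := Set.mem_iUnion₂.mp hz
        exact Set.mem_iUnion₂.mpr ⟨k, hk, Or.inl hzk⟩
      · intro z hz
        obtain ⟨k, hk, hzk⟩ := Set.mem_iUnion₂.mp hz
        rcases hzk with hzk | hzk
        · exact Set.mem_biUnion hk hzk
        · exact hWU hzk
    rw [hUeq]
    apply isPreconnected_sUnion ((x₀, y₀) : ℝ × ℝ)
    · rintro S ⟨k, hk, rfl⟩
      exact Or.inr hw₀
    · rintro S ⟨k, hk, rfl⟩
      obtain ⟨q, hq1, hq2⟩ := hmeets k hk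
      exact IsPreconnected.union q hq1 hq2 ((rect_convex _ _ _ _).isPreconnected)
        hWpc.isConnected.isPreconnected
  -- conclude graph connectivity
  rw [SimpleGraph.connected_iff]
  refine ⟨?_, hnemp⟩
  rintro ⟨u, hu⟩ ⟨v, hv⟩
  by_contra hnr
  set G' := (adjGraph a b c d).induce ({i}ᶜ : Set (Fin n)) with hG'
  set RS : Set (Fin n) :=
    {k | ∃ hk : k ∈ ({i}ᶜ : Set (Fin n)), G'.Reachable ⟨k, hk⟩ ⟨u, hu⟩} with hRS
  set U₁ : Set (ℝ × ℝ) := ⋃ k ∈ RS, Rect (a k) (b k) (c k) (d k) with hU₁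
  set U₂ : Set (ℝ × ℝ) := ⋃ k ∈ ({i}ᶜ : Set (Fin n)) \ RS, Rect (a k) (b k) (c k) (d k) with hU₂
  have hc1 : IsClosed U₁ :=
    Set.Finite.isClosed_biUnion (Set.toFinite _) (fun k _ => rect_closed _ _ _ _)
  have hc2 : IsClosed U₂ :=
    Set.Finite.isClosed_biUnion (Set.toFinite _) (fun k _ => rect_closed _ _ _ _)
  have hsub12 : U ⊆ U₁ ∪ U₂ := by
    intro z hz
    obtain ⟨k, hk, hzk⟩ := Set.mem_iUnion₂.mp hz
    by_cases hkRS : k ∈ RS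
    · exact Or.inl (Set.mem_biUnion hkRS hzk)
    · exact Or.inr (Set.mem_biUnion ⟨hk, hkRS⟩ hzk)
  have hcorner : ∀ k : Fin n, ((a k, c k) : ℝ × ℝ) ∈ Rect (a k) (b k) (c k) (d k) :=
    fun k => mem_rect.mpr ⟨⟨le_refl _, (hlt k).1.le⟩, le_refl _, (hlt k).2.le⟩
  have hne1 : (U ∩ U₁).Nonempty := by
    refine ⟨(a u, c u), Set.mem_biUnion hu (hcorner u), Set.mem_biUnion ?_ (hcorner u)⟩
    exact ⟨hu, SimpleGraph.Reachable.refl _⟩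
  have hne2 : (U ∩ U₂).Nonempty := by
    refine ⟨(a v, c v), Set.mem_biUnion hv (hcorner v), Set.mem_biUnion ?_ (hcorner v)⟩
    refine ⟨hv, ?_⟩
    rintro ⟨hk, hr⟩
    exact hnr hr.symm
  obtain ⟨p, hpU, hp1, hp2⟩ := isPreconnected_closed_iff.mp hUpre U₁ U₂ hc1 hc2 hsub12 hne1 hne2
  obtain ⟨k, hkRS, hpk⟩ := Set.mem_iUnion₂.mp hp1
  obtain ⟨l, ⟨hl, hlRS⟩, hpl⟩ := Set.mem_iUnion₂.mp hp2
  have hkl : k ≠ l := by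
    rintro rfl
    exact hlRS hkRS
  have hadj : (adjGraph a b c d).Adj k l := by
    rw [adjGraph, SimpleGraph.fromRel_adj]
    exact ⟨hkl, Or.inl (nontrivial_inter hcov hlt hdisj hcard hkl hpk hpl)⟩
  obtain ⟨hk, hru⟩ := hkRS
  have hadj' : G'.Adj ⟨l, hl⟩ ⟨k, hk⟩ := hadj.symm
  exact hlRS ⟨hl, hadj'.reachable.trans hru⟩

/-- Two distinct cut vertices of the adjacency graph of a rectangular floorplan
correspond to through rectangles spanning the big rectangle in the same
direction. -/
theorem stmt_10 {n : ℕ} (hn : 3 ≤ n) (A B C D : ℝ) (a b c d : Fin n → ℝ)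
    (h : IsRFP A B C D a b c d) (i j : Fin n) (hij : i ≠ j)
    (hconn : (adjGraph a b c d).Connected)
    (hcuti : ¬ ((adjGraph a b c d).induce ({i}ᶜ : Set (Fin n))).Connected)
    (hcutj : ¬ ((adjGraph a b c d).induce ({j}ᶜ : Set (Fin n))).Connected) :
    ((a i = A ∧ b i = B) ∧ (a j = A ∧ b j = B)) ∨
    ((c i = C ∧ d i = D) ∧ (c j = C ∧ d j = D)) := by
  obtain ⟨hAB, hCD, hlt, hcov, hdisj, hcard⟩ := h
  have hnemp : ∀ m : Fin n, Nonempty ↑({m}ᶜ : Set (Fin n)) := by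
    intro m
    have h0 : (⟨0, by omega⟩ : Fin n) ≠ (⟨1, by omega⟩ : Fin n) := by
      simp [Fin.ext_iff]
    rcases ne_or_eq (⟨0, by omega⟩ : Fin n) m with hne | heq
    · exact ⟨⟨_, by simpa using hne⟩⟩
    · exact ⟨⟨_, by simpa using (heq ▸ h0).symm⟩⟩
  have through : ∀ m : Fin n,
      ¬ ((adjGraph a b c d).induce ({m}ᶜ : Set (Fin n))).Connected →
      (a m = A ∧ b m = B) ∨ (c m = C ∧ d m = D) := by
    intro m hcut
    by_contra hthr
    rw [not_or] at hthr
    exact hcut (induced_connected hAB hCD hlt hcov hdisj hcard m (hnemp m) hthr.1 hthr.2)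
  obtain ⟨hAai, hbiB, hCci, hdiD⟩ := rect_bnd hcov hlt i
  obtain ⟨hAaj, hbjB, hCcj, hdjD⟩ := rect_bnd hcov hlt j
  have habi := (hlt i).1
  have hcdi := (hlt i).2
  have habj := (hlt j).1
  have hcdj := (hlt j).2
  have hmix : ∀ k l : Fin n, k ≠ l → (a k = A ∧ b k = B) → (c l = C ∧ d l = D) → False := by
    intro k l hkl ⟨hak, hbk⟩ ⟨hcl, hdl⟩
    obtain ⟨hAak, hbkB, hCck, hdkD⟩ := rect_bnd hcov hlt k
    obtain ⟨hAal, hblB, hCcl, hdlD⟩ := rect_bnd hcov hlt l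
    have habk := (hlt k).1
    have hcdk := (hlt k).2
    have habl := (hlt l).1
    have hcdl := (hlt l).2
    set z : ℝ × ℝ := ((a l + b l)/2, (c k + d k)/2) with hz
    have hzk : z ∈ Set.Ioo (a k) (b k) ×ˢ Set.Ioo (c k) (d k) := by
      constructor
      · constructor <;> simp only [hz] <;> linarith
      · constructor <;> simp only [hz] <;> linarith
    have hzl : z ∈ Set.Ioo (a l) (b l) ×ˢ Set.Ioo (c l) (d l) := by
      constructor
      · constructor <;> simp only [hz] <;> linarith
      · constructor <;> simp only [hz] <;> linarith
    exact Set.disjoint_left.mp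
      (hdisj (Set.mem_univ k) (Set.mem_univ l) hkl) hzk hzl
  rcases through i hcuti with hi | hi <;> rcases through j hcutj with hj | hj
  · exact Or.inl ⟨hi, hj⟩
  · exact absurd (hmix i j hij hi hj) not_false
  · exact absurd (hmix j i hij.symm hj hi) not_false
  · exact Or.inr ⟨hi, hj⟩
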